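/- For every letter-thin triple (x₁,x₂,x₃): η₀(x₁) + η₀(x₂) + η₀(x₃) ∈ {−1, +1}; in particular |η₀(x₁) + η₀(x₂) + η₀(x₃)| = 1. -/

import Mathlib

open FreeGroup

abbrev W : Type := FreeGroup (Fin 2)

/-- The set of alternating words: reduced words whose letters alternate
between the two generators `a` (index 0) and `b` (index 1). -/
def Alt : Set W := {w | List.Chain' (fun p q : Fin 2 × Bool => p.1 ≠ q.1) w.toWord}

/-- The automorphism `φ_a : a ↦ a⁻¹, b ↦ b` of `F₂`. -/
def phiaF : W →* W :=
  FreeGroup.lift (fun i : Fin 2 => if i = 0 then (FreeGroup.of (0 : Fin 2))⁻¹ else FreeGroup.of 1)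

/-- The automorphism `φ_b : a ↦ a, b ↦ b⁻¹` of `F₂`. -/
def phibF : W →* W :=
  FreeGroup.lift (fun i : Fin 2 => if i = 0 then FreeGroup.of 0 else (FreeGroup.of (1 : Fin 2))⁻¹)

/-- Generating moves for the equivalence relation `∼` on triples:
rotation, inversion, and the sign-change automorphisms `φ_a`, `φ_b`. -/
def TripleBase : W × W × W → W × W × W → Prop := fun t t' =>
  t' = (t.2.1, t.2.2, t.1) ∨
  t' = ((t.2.2)⁻¹, (t.2.1)⁻¹, (t.1)⁻¹) ∨
  t' = (phiaF t.1, phiaF t.2.1, phiaF t.2.2) ∨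
  t' = (phibF t.1, phibF t.2.1, phibF t.2.2)

/-- The equivalence relation `∼` on triples of elements of `F₂`. -/
def TripleEquiv : W × W × W → W × W × W → Prop := Relation.EqvGen TripleBase

/-- Form [T1a]: `(c₁⁻¹ a b c₂, c₂⁻¹ b⁻¹ a c₃, c₃⁻¹ a⁻¹ c₁)`, all words reduced. -/
def FormT1a (y₁ y₂ y₃ : W) : Prop :=
  ∃ c₁ c₂ c₃ : W, c₁ ∈ Alt ∧ c₂ ∈ Alt ∧ c₃ ∈ Alt ∧
    y₁.toWord = (c₁⁻¹).toWord ++ [((0 : Fin 2), true), ((1 : Fin 2), true)] ++ c₂.toWord ∧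
    y₂.toWord = (c₂⁻¹).toWord ++ [((1 : Fin 2), false), ((0 : Fin 2), true)] ++ c₃.toWord ∧
    y₃.toWord = (c₃⁻¹).toWord ++ [((0 : Fin 2), false)] ++ c₁.toWord

/-- Form [T1b]: `(c₁⁻¹ b a c₂, c₂⁻¹ a⁻¹ b c₃, c₃⁻¹ b⁻¹ c₁)`, all words reduced. -/
def FormT1b (y₁ y₂ y₃ : W) : Prop :=
  ∃ c₁ c₂ c₃ : W, c₁ ∈ Alt ∧ c₂ ∈ Alt ∧ c₃ ∈ Alt ∧
    y₁.toWord = (c₁⁻¹).toWord ++ [((1 : Fin 2), true), ((0 : Fin 2), true)] ++ c₂.toWord ∧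
    y₂.toWord = (c₂⁻¹).toWord ++ [((0 : Fin 2), false), ((1 : Fin 2), true)] ++ c₃.toWord ∧
    y₃.toWord = (c₃⁻¹).toWord ++ [((1 : Fin 2), false)] ++ c₁.toWord

/-- Form [T2a]: `(c₁⁻¹ b⁻¹ a b c₂, c₂⁻¹ b⁻¹, b c₁)`, all words reduced. -/
def FormT2a (y₁ y₂ y₃ : W) : Prop :=
  ∃ c₁ c₂ : W, c₁ ∈ Alt ∧ c₂ ∈ Alt ∧
    y₁.toWord = (c₁⁻¹).toWord ++
      [((1 : Fin 2), false), ((0 : Fin 2), true), ((1 : Fin 2), true)] ++ c₂.toWord ∧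
    y₂.toWord = (c₂⁻¹).toWord ++ [((1 : Fin 2), false)] ∧
    y₃.toWord = [((1 : Fin 2), true)] ++ c₁.toWord

/-- Form [T2b]: `(c₁⁻¹ a⁻¹ b a c₂, c₂⁻¹ a⁻¹, a c₁)`, all words reduced. -/
def FormT2b (y₁ y₂ y₃ : W) : Prop :=
  ∃ c₁ c₂ : W, c₁ ∈ Alt ∧ c₂ ∈ Alt ∧
    y₁.toWord = (c₁⁻¹).toWord ++
      [((0 : Fin 2), false), ((1 : Fin 2), true), ((0 : Fin 2), true)] ++ c₂.toWord ∧
    y₂.toWord = (c₂⁻¹).toWord ++ [((0 : Fin 2), false)] ∧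
    y₃.toWord = [((0 : Fin 2), true)] ++ c₁.toWord

/-- A triple of alternating words is letter-thin if it is `∼`-equivalent to a triple
of one of the forms [T1a], [T1b], [T2a], [T2b]. -/
def LetterThin (x₁ x₂ x₃ : W) : Prop :=
  x₁ ∈ Alt ∧ x₂ ∈ Alt ∧ x₃ ∈ Alt ∧
  ∃ y₁ y₂ y₃ : W, TripleEquiv (x₁, x₂, x₃) (y₁, y₂, y₃) ∧
    (FormT1a y₁ y₂ y₃ ∨ FormT1b y₁ y₂ y₃ ∨ FormT2a y₁ y₂ y₃ ∨ FormT2b y₁ y₂ y₃)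

/-- The formal inverse of a word: reverse and flip all signs. -/
def invWord (p : List (Fin 2 × Bool)) : List (Fin 2 × Bool) :=
  (p.reverse).map fun q => (q.1, !q.2)

/-- `ν_p(g)`: the number of (possibly overlapping) occurrences of the word `p`
as a subword of the reduced word representing `g`. -/
def nuCount (p : List (Fin 2 × Bool)) (g : W) : ℕ :=
  ((List.range g.toWord.length).filter fun i => p.isPrefixOf (g.toWord.drop i)).length

/-- The Brooks quasimorphism `η_p = ν_p - ν_{p⁻¹}`. -/
def etaWord (p : List (Fin 2 × Bool)) (g : W) : ℤ :=
  (nuCount p g : ℤ) - (nuCount (invWord p) g : ℤ)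

/-- The quasimorphism `η₀ = η_{ab} - η_{ba} : F₂ → ℤ`. -/
def etaZero (g : W) : ℤ :=
  etaWord [((0 : Fin 2), true), ((1 : Fin 2), true)] g -
    etaWord [((1 : Fin 2), true), ((0 : Fin 2), true)] g

/-!
Write `η₀(g)` as a sum, over the adjacent letter pairs of the reduced word of `g`, of a weight
that is `±1` on `ab, a⁻¹b⁻¹, ba, b⁻¹a⁻¹` and odd under formal inversion of a pair. In each of
the forms [T1a]–[T2b] the three reduced words are `cᵢ⁻¹ mᵢ cᵢ₊₁` (with `c₃ = 1` for [T2a],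
[T2b]) with short middle pieces `mᵢ`, the last letter of `mᵢ` inverse to the first letter of
`mᵢ₊₁`. Oddness of the weight makes the contributions of the `cᵢ` and of the junctions cancel
around the triangle, so the sum of `η₀` is the sum over the pieces `mᵢ`, which is `±1`.

To follow the sum along `∼`, pair it with the sum of `η₀ ∘ φ_a = η₀ ∘ φ_b`: rotation fixes the
pair, inversion negates it and `φ_a`, `φ_b` swap its entries, so membership of the pair in
`{(1, -1), (-1, 1)}` is invariant.
-/

namespace List

variable {α β M : Type*}

def adjSum [AddCommMonoid M] (f : α → α → M) (l : List α) : M := (zipWith f l l.tail).sum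

section AddCommMonoid

variable [AddCommMonoid M] (f : α → α → M)

@[simp] theorem adjSum_nil : adjSum f [] = 0 := rfl

@[simp] theorem adjSum_singleton (x : α) : adjSum f [x] = 0 := rfl

@[simp] theorem adjSum_cons_cons (x y : α) (l : List α) :
    adjSum f (x :: y :: l) = f x y + adjSum f (y :: l) := sum_cons

theorem adjSum_append_cons (l r : List α) (x : α) :
    adjSum f (l ++ x :: r) = adjSum f (l ++ [x]) + adjSum f (x :: r) := by
  induction l with
  | nil => simp
  | cons y l ih =>
    cases l with
    | nil => simp
    | cons z l => simp only [cons_append, adjSum_cons_cons] at ih ⊢; rw [ih, add_assoc]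

theorem adjSum_map (m : β → α) (l : List β) :
    adjSum f (l.map m) = adjSum (fun x y => f (m x) (m y)) l := by
  induction l using twoStepInduction <;> simp_all

theorem adjSum_reverse (l : List α) : adjSum f l.reverse = adjSum (fun x y => f y x) l := by
  induction l with
  | nil => rfl
  | cons x l ih =>
    cases l with
    | nil => rfl
    | cons y l =>
      rw [reverse_cons, reverse_cons, append_assoc, singleton_append, adjSum_append_cons,
        ← reverse_cons, ih, adjSum_cons_cons, adjSum_cons_cons, adjSum_singleton, add_zero,
        add_comm]

end AddCommMonoid

theorem adjSum_sub [AddCommGroup M] (f g : α → α → M) (l : List α) :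
    adjSum (f - g) l = adjSum f l - adjSum g l := by
  induction l using twoStepInduction <;> simp_all [add_sub_add_comm]

theorem adjSum_neg [AddCommGroup M] (f : α → α → M) (l : List α) :
    adjSum (-f) l = -adjSum f l := by
  induction l using twoStepInduction <;> simp_all [add_comm]

theorem length_filter_isPrefixOf_pair [BEq α] [AddCommMonoidWithOne M] (u v : α) (l : List α) :
    (((range l.length).filter fun i => [u, v].isPrefixOf (l.drop i)).length : M) =
      adjSum (fun x y => if (u == x && v == y) then 1 else 0) l := by
  rw [← countP_eq_length_filter]
  induction l with
  | nil => simp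
  | cons x l ih =>
    rw [length_cons, range_succ_eq_map, countP_cons, countP_map]
    simp only [Function.comp_def, drop_succ_cons, drop_zero]
    push_cast
    rw [ih]
    cases l with
    | nil => simp [isPrefixOf]
    | cons y l => cases h : (u == x && v == y) <;> simp_all [isPrefixOf, add_comm]

end List

open List

namespace FreeGroup

variable {α β M : Type*}

def InvAntisymm [Neg M] (f : α × Bool → α × Bool → M) : Prop :=
  ∀ x y : α × Bool, f (y.1, !y.2) (x.1, !x.2) = -f x y

def LastCancelsHead (m₁ m₂ : List (α × Bool)) : Prop :=
  ∃ x, m₂.head? = some x ∧ m₁.getLast? = some (x.1, !x.2)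

section InvAntisymm

variable [AddCommGroup M] {f : α × Bool → α × Bool → M}

theorem adjSum_invRev (hf : InvAntisymm f) (l : List (α × Bool)) :
    adjSum f (invRev l) = -adjSum f l := by
  rw [invRev, adjSum_reverse, adjSum_map, ← adjSum_neg]
  exact congrArg₂ _ (funext₂ fun x y => hf x y) rfl

theorem adjSum_invRev_append_append (hf : InvAntisymm f) {w m w' : List (α × Bool)}
    {x z : α × Bool} (hx : m.head? = some x) (hz : m.getLast? = some z) :
    adjSum f (invRev w ++ m ++ w') =
      adjSum f m - adjSum f ((x.1, !x.2) :: w) + adjSum f (z :: w') := by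
  obtain ⟨m₁, rfl⟩ := head?_eq_some_iff.mp hx
  obtain ⟨m₂, hm₂⟩ := getLast?_eq_some_iff.mp hz
  have hx' : invRev w ++ [x] = invRev ((x.1, !x.2) :: w) := by simp [invRev]
  rw [append_assoc, cons_append, adjSum_append_cons, hx', adjSum_invRev hf, ← cons_append, hm₂,
    append_assoc, singleton_append, adjSum_append_cons]
  abel

end InvAntisymm

variable [DecidableEq α] [DecidableEq β]

def IsTriangle (m₁ m₂ m₃ : List (α × Bool)) (t : FreeGroup α × FreeGroup α × FreeGroup α) : Prop :=
  ∃ c₁ c₂ c₃ : List (α × Bool),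
    t.1.toWord = invRev c₁ ++ m₁ ++ c₂ ∧ t.2.1.toWord = invRev c₂ ++ m₂ ++ c₃ ∧
      t.2.2.toWord = invRev c₃ ++ m₃ ++ c₁

def tripleSum [AddCommMonoid M] (f : α × Bool → α × Bool → M)
    (t : FreeGroup α × FreeGroup α × FreeGroup α) : M :=
  adjSum f t.1.toWord + adjSum f t.2.1.toWord + adjSum f t.2.2.toWord

theorem tripleSum_rotate [AddCommMonoid M] (f : α × Bool → α × Bool → M)
    (t : FreeGroup α × FreeGroup α × FreeGroup α) :
    tripleSum f (t.2.1, t.2.2, t.1) = tripleSum f t := by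
  simp only [tripleSum]
  ac_rfl

theorem tripleSum_inv [AddCommGroup M] {f : α × Bool → α × Bool → M} (hf : InvAntisymm f)
    (t : FreeGroup α × FreeGroup α × FreeGroup α) :
    tripleSum f ((t.2.2)⁻¹, (t.2.1)⁻¹, (t.1)⁻¹) = -tripleSum f t := by
  simp only [tripleSum, toWord_inv, adjSum_invRev hf]
  abel

theorem tripleSum_of_isTriangle [AddCommGroup M] {f : α × Bool → α × Bool → M}
    (hf : InvAntisymm f) {m₁ m₂ m₃ : List (α × Bool)}
    {t : FreeGroup α × FreeGroup α × FreeGroup α} (ht : IsTriangle m₁ m₂ m₃ t)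
    (h₁₂ : LastCancelsHead m₁ m₂) (h₂₃ : LastCancelsHead m₂ m₃) (h₃₁ : LastCancelsHead m₃ m₁) :
    tripleSum f t = adjSum f m₁ + adjSum f m₂ + adjSum f m₃ := by
  obtain ⟨c₁, c₂, c₃, e₁, e₂, e₃⟩ := ht
  obtain ⟨x₂, hx₂, hz₁⟩ := h₁₂
  obtain ⟨x₃, hx₃, hz₂⟩ := h₂₃
  obtain ⟨x₁, hx₁, hz₃⟩ := h₃₁
  rw [tripleSum, e₁, e₂, e₃, adjSum_invRev_append_append hf hx₁ hz₁,
    adjSum_invRev_append_append hf hx₂ hz₂, adjSum_invRev_append_append hf hx₃ hz₃]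
  abel

theorem toWord_map_of_letter {φ : FreeGroup α →* FreeGroup β} {m : α × Bool → β × Bool}
    (hφ : ∀ x, φ (mk [x]) = mk [m x])
    (hm : ∀ x y, (x.1 = y.1 → x.2 = y.2) → (m x).1 = (m y).1 → (m x).2 = (m y).2)
    (g : FreeGroup α) : (φ g).toWord = g.toWord.map m := by
  have hmk : ∀ L, φ (mk L) = mk (L.map m) := by
    intro L
    induction L with
    | nil => exact φ.map_one
    | cons x L ih =>
      rw [← singleton_append, ← mul_mk, φ.map_mul, ih, hφ, mul_mk, map_append, map_singleton]
  rw [← mk_toWord (x := g), hmk, toWord_mk, mk_toWord]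
  have hred : IsReduced (g.toWord.map m) := isChain_map_of_isChain m hm isReduced_toWord
  exact hred.reduce_eq

theorem tripleSum_map_of_toWord [AddCommMonoid M] (f : β × Bool → β × Bool → M)
    {φ : FreeGroup α → FreeGroup β} {m : α × Bool → β × Bool}
    (hφ : ∀ g, (φ g).toWord = g.toWord.map m) (t : FreeGroup α × FreeGroup α × FreeGroup α) :
    tripleSum f (φ t.1, φ t.2.1, φ t.2.2) = tripleSum (fun x y => f (m x) (m y)) t := by
  simp only [tripleSum, hφ, adjSum_map]

end FreeGroup

def phiaLetter (x : Fin 2 × Bool) : Fin 2 × Bool := if x.1 = 0 then (x.1, !x.2) else x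

def phibLetter (x : Fin 2 × Bool) : Fin 2 × Bool := if x.1 = 1 then (x.1, !x.2) else x

theorem phiaF_mk_singleton (x : Fin 2 × Bool) : phiaF (mk [x]) = mk [phiaLetter x] := by
  obtain ⟨i, _ | _⟩ := x <;> fin_cases i <;> simp [phiaF, phiaLetter, ← of.eq_1] <;> rfl

theorem phibF_mk_singleton (x : Fin 2 × Bool) : phibF (mk [x]) = mk [phibLetter x] := by
  obtain ⟨i, _ | _⟩ := x <;> fin_cases i <;> simp [phibF, phibLetter, ← of.eq_1] <;> rfl

theorem toWord_phiaF (g : W) : (phiaF g).toWord = g.toWord.map phiaLetter :=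
  toWord_map_of_letter phiaF_mk_singleton (by decide) g

theorem toWord_phibF (g : W) : (phibF g).toWord = g.toWord.map phibLetter :=
  toWord_map_of_letter phibF_mk_singleton (by decide) g

-- For letters of distinct generators, `y.1 - x.1` is `1` on `(a^±, b^±)` and `-1` on `(b^±, a^±)`.
def sameSignWeight (x y : Fin 2 × Bool) : ℤ := if x.2 = y.2 then (y.1 : ℤ) - x.1 else 0

def oppSignWeight (x y : Fin 2 × Bool) : ℤ := if x.2 = y.2 then 0 else (y.1 : ℤ) - x.1

theorem invAntisymm_sameSignWeight : InvAntisymm sameSignWeight := by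
  unfold InvAntisymm sameSignWeight; decide

theorem invAntisymm_oppSignWeight : InvAntisymm oppSignWeight := by
  unfold InvAntisymm oppSignWeight; decide

theorem sameSignWeight_phiaLetter :
    (fun x y => sameSignWeight (phiaLetter x) (phiaLetter y)) = oppSignWeight := by
  funext x y; revert x y; decide

theorem oppSignWeight_phiaLetter :
    (fun x y => oppSignWeight (phiaLetter x) (phiaLetter y)) = sameSignWeight := by
  funext x y; revert x y; decide

theorem sameSignWeight_phibLetter :
    (fun x y => sameSignWeight (phibLetter x) (phibLetter y)) = oppSignWeight := by
  funext x y; revert x y; decide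

theorem oppSignWeight_phibLetter :
    (fun x y => oppSignWeight (phibLetter x) (phibLetter y)) = sameSignWeight := by
  funext x y; revert x y; decide

theorem etaZero_eq_adjSum (g : W) : etaZero g = adjSum sameSignWeight g.toWord := by
  have hν : ∀ u v : Fin 2 × Bool, (nuCount [u, v] g : ℤ) =
      adjSum (fun x y => if (u == x && v == y) then 1 else 0) g.toWord :=
    fun u v => length_filter_isPrefixOf_pair u v _
  simp only [etaZero, etaWord, invWord, reverse_cons, reverse_nil, nil_append, cons_append,
    map_cons, map_nil, Bool.not_true, hν, ← adjSum_sub]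
  congr 1
  funext x y; revert x y; decide

def etaSums (t : W × W × W) : ℤ × ℤ := (tripleSum sameSignWeight t, tripleSum oppSignWeight t)

def unitPairs : Finset (ℤ × ℤ) := {(1, -1), (-1, 1)}

theorem neg_mem_unitPairs_iff (p : ℤ × ℤ) : -p ∈ unitPairs ↔ p ∈ unitPairs := by
  obtain ⟨a, b⟩ := p
  simp only [unitPairs, Finset.mem_insert, Finset.mem_singleton, Prod.neg_mk, Prod.mk.injEq]
  omega

theorem swap_mem_unitPairs_iff (p : ℤ × ℤ) : p.swap ∈ unitPairs ↔ p ∈ unitPairs := by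
  obtain ⟨a, b⟩ := p
  simp only [unitPairs, Finset.mem_insert, Finset.mem_singleton, Prod.swap_prod_mk, Prod.mk.injEq]
  omega

theorem etaSums_of_tripleBase {t t' : W × W × W} (h : TripleBase t t') :
    etaSums t' = etaSums t ∨ etaSums t' = -etaSums t ∨ etaSums t' = (etaSums t).swap := by
  rcases h with rfl | rfl | rfl | rfl
  · exact Or.inl (by simp only [etaSums, tripleSum_rotate])
  · exact Or.inr (Or.inl (by
      simp only [etaSums, tripleSum_inv invAntisymm_sameSignWeight,
        tripleSum_inv invAntisymm_oppSignWeight, Prod.neg_mk]))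
  · exact Or.inr (Or.inr (by
      simp only [etaSums, tripleSum_map_of_toWord _ toWord_phiaF, sameSignWeight_phiaLetter,
        oppSignWeight_phiaLetter, Prod.swap_prod_mk]))
  · exact Or.inr (Or.inr (by
      simp only [etaSums, tripleSum_map_of_toWord _ toWord_phibF, sameSignWeight_phibLetter,
        oppSignWeight_phibLetter, Prod.swap_prod_mk]))

theorem etaSums_mem_unitPairs_iff {t t' : W × W × W} (h : TripleEquiv t t') :
    etaSums t ∈ unitPairs ↔ etaSums t' ∈ unitPairs := by
  have hbase : ∀ s s', TripleBase s s' → (etaSums s ∈ unitPairs) = (etaSums s' ∈ unitPairs) := by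
    intro s s' hs
    rcases etaSums_of_tripleBase hs with e | e | e <;> rw [e]
    · rw [neg_mem_unitPairs_iff]
    · rw [swap_mem_unitPairs_iff]
  exact Iff.of_eq (congrArg (Quot.lift _ hbase) (Quot.eqvGen_sound h))

theorem FormT1a.isTriangle {y₁ y₂ y₃ : W} (h : FormT1a y₁ y₂ y₃) :
    IsTriangle [(0, true), (1, true)] [(1, false), (0, true)] [(0, false)] (y₁, y₂, y₃) := by
  obtain ⟨c₁, c₂, c₃, -, -, -, h₁, h₂, h₃⟩ := h
  rw [toWord_inv] at h₁ h₂ h₃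
  exact ⟨_, _, _, h₁, h₂, h₃⟩

theorem FormT1b.isTriangle {y₁ y₂ y₃ : W} (h : FormT1b y₁ y₂ y₃) :
    IsTriangle [(1, true), (0, true)] [(0, false), (1, true)] [(1, false)] (y₁, y₂, y₃) := by
  obtain ⟨c₁, c₂, c₃, -, -, -, h₁, h₂, h₃⟩ := h
  rw [toWord_inv] at h₁ h₂ h₃
  exact ⟨_, _, _, h₁, h₂, h₃⟩

theorem FormT2a.isTriangle {y₁ y₂ y₃ : W} (h : FormT2a y₁ y₂ y₃) :
    IsTriangle [(1, false), (0, true), (1, true)] [(1, false)] [(1, true)] (y₁, y₂, y₃) := by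
  obtain ⟨c₁, c₂, -, -, h₁, h₂, h₃⟩ := h
  rw [toWord_inv] at h₁ h₂
  exact ⟨_, _, [], h₁, by rw [h₂, append_nil], by rw [h₃, invRev_empty, nil_append]⟩

theorem FormT2b.isTriangle {y₁ y₂ y₃ : W} (h : FormT2b y₁ y₂ y₃) :
    IsTriangle [(0, false), (1, true), (0, true)] [(0, false)] [(0, true)] (y₁, y₂, y₃) := by
  obtain ⟨c₁, c₂, -, -, h₁, h₂, h₃⟩ := h
  rw [toWord_inv] at h₁ h₂
  exact ⟨_, _, [], h₁, by rw [h₂, append_nil], by rw [h₃, invRev_empty, nil_append]⟩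

theorem etaSums_mem_of_isTriangle {m₁ m₂ m₃ : List (Fin 2 × Bool)} {t : W × W × W}
    (ht : IsTriangle m₁ m₂ m₃ t) (h₁₂ : LastCancelsHead m₁ m₂) (h₂₃ : LastCancelsHead m₂ m₃)
    (h₃₁ : LastCancelsHead m₃ m₁)
    (hm : (adjSum sameSignWeight m₁ + adjSum sameSignWeight m₂ + adjSum sameSignWeight m₃,
      adjSum oppSignWeight m₁ + adjSum oppSignWeight m₂ + adjSum oppSignWeight m₃) ∈ unitPairs) :
    etaSums t ∈ unitPairs := by
  rwa [etaSums, tripleSum_of_isTriangle invAntisymm_sameSignWeight ht h₁₂ h₂₃ h₃₁,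
    tripleSum_of_isTriangle invAntisymm_oppSignWeight ht h₁₂ h₂₃ h₃₁]

theorem etaSums_mem_of_form {y₁ y₂ y₃ : W}
    (h : FormT1a y₁ y₂ y₃ ∨ FormT1b y₁ y₂ y₃ ∨ FormT2a y₁ y₂ y₃ ∨ FormT2b y₁ y₂ y₃) :
    etaSums (y₁, y₂, y₃) ∈ unitPairs := by
  rcases h with h | h | h | h <;>
    exact etaSums_mem_of_isTriangle h.isTriangle ⟨_, rfl, rfl⟩ ⟨_, rfl, rfl⟩ ⟨_, rfl, rfl⟩
      (by decide)

/-- **Proposition.** For every letter-thin triple `(x₁,x₂,x₃)` we have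
`η₀(x₁) + η₀(x₂) + η₀(x₃) ∈ {-1, +1}`. -/
theorem etaZero_letterThin (x₁ x₂ x₃ : W) (h : LetterThin x₁ x₂ x₃) :
    etaZero x₁ + etaZero x₂ + etaZero x₃ = 1 ∨
    etaZero x₁ + etaZero x₂ + etaZero x₃ = -1 := by
  obtain ⟨-, -, -, y₁, y₂, y₃, hxy, hy⟩ := h
  have hx : etaSums (x₁, x₂, x₃) ∈ unitPairs :=
    (etaSums_mem_unitPairs_iff hxy).mpr (etaSums_mem_of_form hy)
  have hfst : (etaSums (x₁, x₂, x₃)).1 = etaZero x₁ + etaZero x₂ + etaZero x₃ := by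
    simp only [etaSums, tripleSum, etaZero_eq_adjSum]
  simp only [unitPairs, Finset.mem_insert, Finset.mem_singleton] at hx
  rcases hx with hx | hx <;> simp [← hfst, hx]
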